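/- Let v_1 > 0, v_2 ≥ 0 and 0 ≤ ν ≤ 1. Let (S_n) be real random variables converging in distribution to N(0, v_1 + ν v_2), and let (B_n) be positive random variables converging in probability to v_1 + v_2. Then for every c > 0, lim_{n→∞} P(|S_n| / √B_n > c) = 2 Φ(−c · √((v_1 + v_2)/(v_1 + ν v_2))), where Φ is the standard normal cumulative distribution function. Moreover this limit is ≤ 2 Φ(−c), with strict inequality if and only if ν < 1 and v_2 > 0. (This is the precise content of Corollaries 1 and 2 of the paper: the score test T_S and log-rank test T_L, whose variance estimators converge to v_1 + v_2 while their numerators are asymptotically N(0, v_1 + ν v_2) with v_1 = E[Var(O | Z)] and v_2 = Var(E[O | Z]), are valid when ν = 1 or v_2 = 0 and strictly conservative when ν < 1 and v_2 > 0.) -/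

import Mathlib

/-!
The rejection event `c < |Sₙ| / √Bₙ` is `c √Bₙ < |Sₙ|`. Since `Bₙ → b = v₁ + v₂` in probability,
it is squeezed, up to events of vanishing probability, between `c √(b ± ε) < |Sₙ|`. By the
portmanteau theorem (the Gaussian limit charges no boundary point `±a`) these have limits
`2 Φ(-c √(b ± ε) / σ)` with `σ² = v₁ + ν v₂`, which tend to `2 Φ(-c √b / σ)` as `ε → 0`.
Finally `σ² ≤ b`, with equality iff `ν v₂ = v₂`, and `Φ` is strictly increasing.
-/

open MeasureTheory ProbabilityTheory Filter Finset Topology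
open scoped NNReal ENNReal

/-- Convergence in distribution of a sequence of real random variables to a limit
law `μ`, formulated as weak convergence tested against bounded continuous functions. -/
def TendstoInDistribution {Ω : Type*} [MeasurableSpace Ω] (P : Measure Ω)
    (X : ℕ → Ω → ℝ) (μ : Measure ℝ) : Prop :=
  ∀ f : BoundedContinuousFunction ℝ ℝ,
    Tendsto (fun n => ∫ ω, f (X n ω) ∂P) atTop (𝓝 (∫ x, f x ∂μ))

/-- The cumulative distribution function `Φ` of the standard normal law `N(0,1)`. -/
noncomputable def stdGaussianCDF (x : ℝ) : ℝ := ((gaussianReal 0 1) (Set.Iic x)).toReal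

theorem mul_lt_self_iff {α : Type*} [Semiring α] [LinearOrder α] [IsStrictOrderedRing α]
    {a b : α} (hb : 0 ≤ b) : a * b < b ↔ a < 1 ∧ 0 < b := by
  rcases hb.eq_or_lt with rfl | hb
  · simp
  · simp [mul_lt_iff_lt_one_left hb, hb]

namespace ProbabilityTheory

variable {μ : Measure ℝ} [IsProbabilityMeasure μ]

theorem continuous_cdf [NullSingletonClass μ] : Continuous (cdf μ) := by
  refine continuous_iff_continuousAt.2 fun a => ?_
  have h : (cdf μ).measure {a} = 0 := by rw [measure_cdf]; exact measure_singleton a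
  rw [StieltjesFunction.measure_singleton, ENNReal.ofReal_eq_zero, sub_nonpos] at h
  rw [(cdf μ).mono.continuousAt_iff_leftLim_eq_rightLim, StieltjesFunction.rightLim_eq]
  exact le_antisymm ((cdf μ).mono.leftLim_le le_rfl) h

theorem strictMono_cdf_of_absolutelyContinuous (h : volume ≪ μ) : StrictMono (cdf μ) := by
  intro x y hxy
  have hIoc : μ (Set.Ioc x y) ≠ 0 := fun h0 =>
    hxy.not_ge (by simpa [Real.volume_Ioc] using h h0)
  rwa [← measure_cdf (μ := μ), StieltjesFunction.measure_Ioc, ne_eq, ENNReal.ofReal_eq_zero,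
    not_le, sub_pos] at hIoc

theorem measureReal_lt_abs_eq_two_mul_cdf [NullSingletonClass μ] (hμ : μ.map Neg.neg = μ)
    {a : ℝ} (ha : 0 ≤ a) : μ.real {x | a < |x|} = 2 * cdf μ (-a) := by
  have hsplit : {x : ℝ | a < |x|} = Set.Iio (-a) ∪ Set.Ioi a := by
    ext x; simp [lt_abs, lt_neg, or_comm]
  have hIoi : μ.real (Set.Ioi a) = μ.real (Set.Iio (-a)) := by
    conv_lhs => rw [← hμ]
    rw [map_measureReal_apply measurable_neg measurableSet_Ioi]
    simp
  have hdisj : Disjoint (Set.Iio (-a)) (Set.Ioi a) :=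
    (Set.Iic_disjoint_Ioi (by linarith)).mono_left Set.Iio_subset_Iic_self
  rw [hsplit, measureReal_union hdisj measurableSet_Ioi, hIoi, measureReal_congr Iio_ae_eq_Iic,
    cdf_eq_real]
  ring

end ProbabilityTheory

theorem stdGaussianCDF_eq_cdf : stdGaussianCDF = cdf (gaussianReal 0 1) :=
  funext fun x => (cdf_eq_real _ x).symm

@[fun_prop]
theorem continuous_stdGaussianCDF : Continuous stdGaussianCDF := by
  have := nullSingletonClass_gaussianReal (μ := 0) one_ne_zero
  rw [stdGaussianCDF_eq_cdf]
  exact continuous_cdf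

theorem strictMono_stdGaussianCDF : StrictMono stdGaussianCDF := by
  rw [stdGaussianCDF_eq_cdf]
  exact strictMono_cdf_of_absolutelyContinuous (gaussianReal_absolutelyContinuous' 0 one_ne_zero)

theorem gaussianReal_measureReal_lt_abs {v : ℝ≥0} (hv : v ≠ 0) {a : ℝ} (ha : 0 ≤ a) :
    (gaussianReal 0 v).real {x | a < |x|} = 2 * stdGaussianCDF (-(a / √v)) := by
  have hσ : 0 < √(v : ℝ) := Real.sqrt_pos.2 (by positivity)
  have hmap : (gaussianReal 0 1).map (√(v : ℝ) * ·) = gaussianReal 0 v := by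
    rw [gaussianReal_map_const_mul]
    congr 1
    · simp
    · ext; simp
  have hpre : (√(v : ℝ) * ·) ⁻¹' {x | a < |x|} = {z | a / √v < |z|} := by
    ext z
    simp [abs_mul, abs_of_pos hσ, div_lt_iff₀ hσ, mul_comm]
  have := nullSingletonClass_gaussianReal (μ := 0) one_ne_zero
  rw [← hmap, map_measureReal_apply (measurable_const_mul _)
    (measurableSet_lt measurable_const measurable_abs), hpre,
    measureReal_lt_abs_eq_two_mul_cdf (by simpa using gaussianReal_map_neg (μ := 0) (v := 1))
      (div_nonneg ha hσ.le), stdGaussianCDF_eq_cdf]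

theorem TendstoInDistribution.tendsto_measureReal_preimage {Ω : Type*} [MeasurableSpace Ω]
    {P : Measure Ω} [IsProbabilityMeasure P] {X : ℕ → Ω → ℝ} {μ : Measure ℝ}
    [IsProbabilityMeasure μ] (hX : TendstoInDistribution P X μ)
    (hXm : ∀ n, AEMeasurable (X n) P) {E : Set ℝ} (hE : MeasurableSet E)
    (hE' : μ (frontier E) = 0) :
    Tendsto (fun n => P.real (X n ⁻¹' E)) atTop (𝓝 (μ.real E)) := by
  let μs : ℕ → ProbabilityMeasure ℝ :=
    fun n => ⟨P.map (X n), Measure.isProbabilityMeasure_map (hXm n)⟩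
  let μ₀ : ProbabilityMeasure ℝ := ⟨μ, ‹_›⟩
  have hμs : Tendsto μs atTop (𝓝 μ₀) := by
    rw [ProbabilityMeasure.tendsto_iff_forall_integral_tendsto]
    intro f
    refine (hX f).congr fun n => ?_
    exact (integral_map (hXm n) f.continuous.aestronglyMeasurable).symm
  refine ((ENNReal.tendsto_toReal (measure_ne_top μ E)).comp
    (ProbabilityMeasure.tendsto_measure_of_null_frontier_of_tendsto' hμs hE')).congr fun n => ?_
  simp [μs, Measure.real, Measure.map_apply_of_aemeasurable (hXm n) hE]

theorem MeasureTheory.TendstoInMeasure.comp_continuousAt {α ι E F : Type*} [MeasurableSpace α]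
    {μ : Measure α} {l : Filter ι} [PseudoMetricSpace E] [PseudoMetricSpace F]
    {f : ι → α → E} {b : E} {g : E → F} (hf : TendstoInMeasure μ f l (fun _ => b))
    (hg : ContinuousAt g b) : TendstoInMeasure μ (fun i x => g (f i x)) l (fun _ => g b) := by
  rw [tendstoInMeasure_iff_dist] at hf ⊢
  intro ε hε
  obtain ⟨δ, hδ, hgδ⟩ := Metric.continuousAt_iff.1 hg ε hε
  refine tendsto_of_tendsto_of_tendsto_of_le_of_le tendsto_const_nhds (hf δ hδ)
    (fun _ => bot_le) fun i => measure_mono fun x hx => ?_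
  exact not_lt.1 fun h => (not_le.2 (hgδ h)) hx

section

variable {α ι : Type*} [MeasurableSpace α] {μ : Measure α} [IsFiniteMeasure μ] {l : Filter ι}
  {T Y : ι → α → ℝ} {τ : ℝ}

theorem MeasureTheory.TendstoInMeasure.tendsto_measureReal_le_of_lt
    (hT : TendstoInMeasure μ T l (fun _ => τ)) {s : ℝ} (hs : s < τ) :
    Tendsto (fun i => μ.real {x | T i x ≤ s}) l (𝓝 0) := by
  rw [tendstoInMeasure_iff_measureReal_dist] at hT
  refine tendsto_of_tendsto_of_tendsto_of_le_of_le tendsto_const_nhds (hT (τ - s) (by linarith))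
    (fun _ => measureReal_nonneg) fun i => measureReal_mono fun x (hx : T i x ≤ s) => ?_
  show τ - s ≤ dist (T i x) τ
  exact Real.dist_eq _ _ ▸ le_abs.2 (Or.inr (by linarith))

theorem MeasureTheory.TendstoInMeasure.tendsto_measureReal_ge_of_gt
    (hT : TendstoInMeasure μ T l (fun _ => τ)) {s : ℝ} (hs : τ < s) :
    Tendsto (fun i => μ.real {x | s ≤ T i x}) l (𝓝 0) := by
  rw [tendstoInMeasure_iff_measureReal_dist] at hT
  refine tendsto_of_tendsto_of_tendsto_of_le_of_le tendsto_const_nhds (hT (s - τ) (by linarith))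
    (fun _ => measureReal_nonneg) fun i => measureReal_mono fun x (hx : s ≤ T i x) => ?_
  show s - τ ≤ dist (T i x) τ
  exact Real.dist_eq _ _ ▸ le_abs.2 (Or.inl (by linarith))

theorem tendsto_measureReal_lt_of_tendstoInMeasure {H : ℝ → ℝ}
    (hT : TendstoInMeasure μ T l (fun _ => τ)) (hH : ContinuousAt H τ)
    (hY : ∀ᶠ t in 𝓝 τ, Tendsto (fun i => μ.real {x | t < Y i x}) l (𝓝 (H t))) :
    Tendsto (fun i => μ.real {x | T i x < Y i x}) l (𝓝 (H τ)) := by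
  rw [tendsto_order]
  constructor
  · intro a ha
    obtain ⟨a', ha, ha'⟩ := exists_between ha
    obtain ⟨s, hs, hHs, hYs⟩ := ((hH.eventually (lt_mem_nhds ha')).and hY).exists_gt
    filter_upwards [hYs.eventually (lt_mem_nhds hHs),
      (hT.tendsto_measureReal_ge_of_gt hs).eventually (gt_mem_nhds (sub_pos.2 ha))] with i h₁ h₂
    have hsub : {x | s < Y i x} ⊆ {x | T i x < Y i x} ∪ {x | s ≤ T i x} := fun x hx =>
      (lt_or_ge (T i x) s).imp (fun h => h.trans hx) id
    linarith [(measureReal_mono (μ := μ) hsub).trans (measureReal_union_le _ _)]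
  · intro a ha
    obtain ⟨a', ha', ha⟩ := exists_between ha
    obtain ⟨s, hs, hHs, hYs⟩ := ((hH.eventually (gt_mem_nhds ha')).and hY).exists_lt
    filter_upwards [hYs.eventually (gt_mem_nhds hHs),
      (hT.tendsto_measureReal_le_of_lt hs).eventually (gt_mem_nhds (sub_pos.2 ha))] with i h₁ h₂
    have hsub : {x | T i x < Y i x} ⊆ {x | s < Y i x} ∪ {x | T i x ≤ s} := fun x hx =>
      (lt_or_ge s (T i x)).imp (fun h => h.trans hx) id
    linarith [(measureReal_mono (μ := μ) hsub).trans (measureReal_union_le _ _)]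

end

theorem tendsto_measureReal_lt_abs {Ω : Type*} [MeasurableSpace Ω] {P : Measure Ω}
    [IsProbabilityMeasure P] {S : ℕ → Ω → ℝ} {v : ℝ≥0} (hv : v ≠ 0)
    (hS : TendstoInDistribution P S (gaussianReal 0 v)) (hSm : ∀ n, AEMeasurable (S n) P)
    {a : ℝ} (ha : 0 ≤ a) :
    Tendsto (fun n => P.real {ω | a < |S n ω|}) atTop (𝓝 (2 * stdGaussianCDF (-(a / √v)))) := by
  have := nullSingletonClass_gaussianReal (μ := 0) hv
  have hfrontier : gaussianReal 0 v (frontier {x | a < |x|}) = 0 := by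
    refine measure_mono_null ((frontier_lt_subset_eq continuous_const continuous_abs).trans
      fun x (hx : a = |x|) => ?_) ((Set.toFinite {a, -a}).measure_zero _)
    exact eq_or_eq_neg_of_abs_eq hx.symm
  rw [← gaussianReal_measureReal_lt_abs hv ha]
  exact hS.tendsto_measureReal_preimage hSm (measurableSet_lt measurable_const measurable_abs)
    hfrontier

theorem tendsto_measureReal_lt_abs_div_sqrt {Ω : Type*} [MeasurableSpace Ω] {P : Measure Ω}
    [IsProbabilityMeasure P] {S B : ℕ → Ω → ℝ} {v : ℝ≥0} (hv : v ≠ 0) {b c : ℝ} (hb : 0 < b)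
    (hc : 0 < c) (hS : TendstoInDistribution P S (gaussianReal 0 v))
    (hSm : ∀ n, AEMeasurable (S n) P) (hBpos : ∀ n ω, 0 < B n ω)
    (hB : TendstoInMeasure P B atTop (fun _ => b)) :
    Tendsto (fun n => P.real {ω | c < |S n ω| / √(B n ω)}) atTop
      (𝓝 (2 * stdGaussianCDF (-(c * √b / √v)))) := by
  have hevent : ∀ n, {ω | c < |S n ω| / √(B n ω)} = {ω | c * √(B n ω) < |S n ω|} := fun n => by
    ext ω
    exact lt_div_iff₀ (Real.sqrt_pos.2 (hBpos n ω))
  simp_rw [hevent]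
  refine tendsto_measureReal_lt_of_tendstoInMeasure
    (hB.comp_continuousAt (g := fun t => c * √t) (by fun_prop))
    (H := fun t => 2 * stdGaussianCDF (-(t / √v))) (by fun_prop) ?_
  filter_upwards [lt_mem_nhds (by positivity : 0 < c * √b)] with t ht
  exact tendsto_measureReal_lt_abs hv hS hSm ht.le

theorem score_test_conservativeness_general
    {Ω : Type*} [MeasurableSpace Ω] (P : Measure Ω) [IsProbabilityMeasure P]
    (v1 v2 ν : ℝ) (hv1 : 0 < v1) (hv2 : 0 ≤ v2) (hν0 : 0 ≤ ν) (hν1 : ν ≤ 1)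
    (Sn Bn : ℕ → Ω → ℝ)
    (hSmeas : ∀ n, Measurable (Sn n))
    (hBpos : ∀ n ω, 0 < Bn n ω)
    (hS : TendstoInDistribution P Sn (gaussianReal 0 ((v1 + ν * v2).toNNReal)))
    (hB : TendstoInMeasure P Bn atTop (fun _ => v1 + v2)) :
    ∀ c : ℝ, 0 < c →
      (Tendsto (fun n => (P {ω | c < |Sn n ω| / Real.sqrt (Bn n ω)}).toReal) atTop
        (𝓝 (2 * stdGaussianCDF (-c * Real.sqrt ((v1 + v2) / (v1 + ν * v2))))))
      ∧ 2 * stdGaussianCDF (-c * Real.sqrt ((v1 + v2) / (v1 + ν * v2)))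
          ≤ 2 * stdGaussianCDF (-c)
      ∧ (2 * stdGaussianCDF (-c * Real.sqrt ((v1 + v2) / (v1 + ν * v2)))
          < 2 * stdGaussianCDF (-c) ↔ ν < 1 ∧ 0 < v2) := by
  intro c hc
  have hσ : 0 < v1 + ν * v2 := by positivity
  have hσb : ν * v2 ≤ v2 := mul_le_of_le_one_left hv2 hν1
  have hv : (v1 + ν * v2).toNNReal ≠ 0 := by simpa using hσ
  have hΦ := strictMono_stdGaussianCDF
  refine ⟨?_, ?_, ?_⟩
  · have := tendsto_measureReal_lt_abs_div_sqrt hv (by positivity) hc hS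
      (fun n => (hSmeas n).aemeasurable) hBpos hB
    rwa [Real.coe_toNNReal _ hσ.le, mul_div_assoc, ← Real.sqrt_div' _ hσ.le, ← neg_mul] at this
  · rw [mul_le_mul_iff_right₀ two_pos, hΦ.le_iff_le, neg_mul, neg_le_neg_iff,
      le_mul_iff_one_le_right hc, Real.one_le_sqrt, one_le_div hσ]
    linarith
  · rw [mul_lt_mul_iff_right₀ two_pos, hΦ.lt_iff_lt, neg_mul, neg_lt_neg_iff,
      lt_mul_iff_one_lt_right hc, Real.lt_sqrt zero_le_one, one_pow, one_lt_div hσ,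
      add_lt_add_iff_left, mul_lt_self_iff hv2]

/-- **Corollaries 1 and 2 of the paper (abstract form).**
If `S_n →ᵈ N(0, v₁ + ν v₂)` and `B_n →ᵖ v₁ + v₂` with `B_n > 0`, then for every `c > 0`
the rejection probability `P(|S_n|/√B_n > c)` converges to
`2 Φ(-c √((v₁+v₂)/(v₁+ν v₂)))`; this limit is at most `2 Φ(-c)`, with strict
inequality if and only if `ν < 1` and `v₂ > 0`. -/
theorem score_test_conservativeness
    {Ω : Type*} [MeasurableSpace Ω] (P : Measure Ω) [IsProbabilityMeasure P]
    (v1 v2 ν : ℝ) (hv1 : 0 < v1) (hv2 : 0 ≤ v2) (hν0 : 0 ≤ ν) (hν1 : ν ≤ 1)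
    (Sn Bn : ℕ → Ω → ℝ)
    (hSmeas : ∀ n, Measurable (Sn n)) (hBmeas : ∀ n, Measurable (Bn n))
    (hBpos : ∀ n ω, 0 < Bn n ω)
    (hS : TendstoInDistribution P Sn (gaussianReal 0 ((v1 + ν * v2).toNNReal)))
    (hB : TendstoInMeasure P Bn atTop (fun _ => v1 + v2)) :
    ∀ c : ℝ, 0 < c →
      (Tendsto (fun n => (P {ω | c < |Sn n ω| / Real.sqrt (Bn n ω)}).toReal) atTop
        (𝓝 (2 * stdGaussianCDF (-c * Real.sqrt ((v1 + v2) / (v1 + ν * v2))))))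
      ∧ 2 * stdGaussianCDF (-c * Real.sqrt ((v1 + v2) / (v1 + ν * v2)))
          ≤ 2 * stdGaussianCDF (-c)
      ∧ (2 * stdGaussianCDF (-c * Real.sqrt ((v1 + v2) / (v1 + ν * v2)))
          < 2 * stdGaussianCDF (-c) ↔ ν < 1 ∧ 0 < v2) :=
  score_test_conservativeness_general P v1 v2 ν hv1 hv2 hν0 hν1 Sn Bn hSmeas hBpos hS hB
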